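/- arXiv:2403.07002 — 6 statements merged into one kernel-verified Lean document; each statement's English description precedes it below -/
import Mathlib

section
/- Let d : ℝ → ℝ be continuous, positive, ω-periodic and p : ℝ → ℝ continuous. If the ω-periodic function y* and the delays τᵢ > 0 satisfy p(y*(t)) > d(t+τ)·exp(∫ₜ^{t+τ} d(r) dr) for all t ∈ [0,ω], then for all t ∈ [0,ω]: ∫ₜ^{t+ω} exp(∫_{t+τ}^{s} d(r) dr)·p(y*(s)) ds > exp(∫₀^ω d(r) dr) - 1. -/
/-!
Write `D(s) = ∫_{t+τ}^{s} d`. Since `D(s + τ) = D(s) + ∫_s^{s+τ} d`, hypothesis (H3.a), extended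
to all `s` by periodicity, gives the pointwise bound `d(s+τ) e^{D(s+τ)} < e^{D(s)} p(y*(s))`.
The left side is the derivative of `s ↦ e^{D(s+τ)}`, so its integral over `[t, t+ω]` equals
`e^{∫_{t+τ}^{t+τ+ω} d} - 1 = e^{∫_0^ω d} - 1` by periodicity of `d`.
-/

open MeasureTheory Set intervalIntegral

theorem Function.Periodic.forall_of_forall_mem_Icc {α : Type*} {f : ℝ → α} {c : ℝ}
    (hf : Function.Periodic f c) (hc : 0 < c) {P : α → Prop}
    (h : ∀ x ∈ Icc 0 c, P (f x)) (x : ℝ) : P (f x) := by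
  obtain ⟨y, hy, hxy⟩ := hf.exists_mem_Ico₀ hc x
  exact hxy ▸ h y (Ico_subset_Icc_self hy)

theorem Function.Periodic.intervalIntegral_comp_add {f : ℝ → ℝ} {c : ℝ}
    (hf : Function.Periodic f c) (τ : ℝ) :
    Function.Periodic (fun s => ∫ r in s..(s + τ), f r) c := by
  intro s
  simp only [add_right_comm s c τ, ← integral_comp_add_right f c, hf _]

theorem integral_mul_exp_integral {d : ℝ → ℝ} (hd : Continuous d) (a b : ℝ) :
    ∫ s in a..b, d s * Real.exp (∫ r in a..s, d r) = Real.exp (∫ r in a..b, d r) - 1 := by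
  have hderiv : ∀ s, HasDerivAt (fun s => Real.exp (∫ r in a..s, d r))
      (d s * Real.exp (∫ r in a..s, d r)) s := fun s => by
    simpa only [mul_comm] using (hd.integral_hasStrictDerivAt a s).hasDerivAt.exp
  have hcont : Continuous fun s => d s * Real.exp (∫ r in a..s, d r) :=
    hd.mul (continuous_primitive (fun _ _ => hd.intervalIntegrable _ _) a).rexp
  rw [integral_eq_sub_of_hasDerivAt (fun s _ => hderiv s) (hcont.intervalIntegrable _ _),
    integral_same, Real.exp_zero]

theorem Function.Periodic.integral_shift_mul_exp_integral {d : ℝ → ℝ} {ω : ℝ}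
    (hd : Continuous d) (hdper : Function.Periodic d ω) (t τ : ℝ) :
    ∫ s in t..(t + ω), d (s + τ) * Real.exp (∫ r in (t + τ)..(s + τ), d r) =
      Real.exp (∫ r in (0 : ℝ)..ω, d r) - 1 := by
  rw [integral_comp_add_right (fun u => d u * Real.exp (∫ r in (t + τ)..u, d r)),
    integral_mul_exp_integral hd, add_right_comm, hdper.intervalIntegral_add_eq _ 0, zero_add]

theorem stmt_4_general (ω τ : ℝ) (hω : 0 < ω) (d p ystar : ℝ → ℝ)
    (hd : Continuous d) (hdper : Function.Periodic d ω)
    (hp : Continuous p) (hy : Continuous ystar) (hyper : Function.Periodic ystar ω)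
    (hH3a : ∀ t ∈ Set.Icc (0:ℝ) ω,
      d (t + τ) * Real.exp (∫ r in t..(t + τ), d r) < p (ystar t)) :
    ∀ t ∈ Set.Icc (0:ℝ) ω,
      Real.exp (∫ r in (0:ℝ)..ω, d r) - 1 <
        ∫ s in t..(t + ω), Real.exp (∫ r in (t + τ)..s, d r) * p (ystar s) := by
  intro t _
  have hH3 : ∀ s, d (s + τ) * Real.exp (∫ r in s..(s + τ), d r) < p (ystar s) := by
    have hper : Function.Periodic
        (fun s => (p (ystar s), d (s + τ) * Real.exp (∫ r in s..(s + τ), d r))) ω := fun s => by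
      have hI : ∫ r in (s + ω)..(s + ω + τ), d r = ∫ r in s..(s + τ), d r :=
        hdper.intervalIntegral_comp_add τ s
      dsimp only
      rw [hyper s, hI, add_right_comm, hdper]
    exact hper.forall_of_forall_mem_Icc (P := fun q => q.2 < q.1) hω hH3a
  have hint : ∀ a b, IntervalIntegrable d volume a b := fun _ _ => hd.intervalIntegrable _ _
  have hpt : ∀ s, d (s + τ) * Real.exp (∫ r in (t + τ)..(s + τ), d r) <
      Real.exp (∫ r in (t + τ)..s, d r) * p (ystar s) := fun s => by
    rw [← integral_add_adjacent_intervals (hint _ s) (hint s _), Real.exp_add, mul_left_comm]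
    exact mul_lt_mul_of_pos_left (hH3 s) (Real.exp_pos _)
  have hprim := continuous_primitive hint (t + τ)
  rw [← hdper.integral_shift_mul_exp_integral hd t τ]
  exact integral_lt_integral_of_continuousOn_of_le_of_exists_lt (by linarith)
    (by fun_prop) (by fun_prop) (fun s _ => (hpt s).le) ⟨t, ⟨le_rfl, by linarith⟩, hpt t⟩

theorem stmt_4 (ω τ : ℝ) (hω : 0 < ω) (hτ : 0 < τ) (d p ystar : ℝ → ℝ)
    (hd : Continuous d) (hdpos : ∀ t, 0 < d t) (hdper : Function.Periodic d ω)
    (hp : Continuous p) (hy : Continuous ystar) (hyper : Function.Periodic ystar ω)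
    (hH3a : ∀ t ∈ Set.Icc (0:ℝ) ω,
      d (t + τ) * Real.exp (∫ r in t..(t + τ), d r) < p (ystar t)) :
    ∀ t ∈ Set.Icc (0:ℝ) ω,
      Real.exp (∫ r in (0:ℝ)..ω, d r) - 1 <
        ∫ s in t..(t + ω), Real.exp (∫ r in (t + τ)..s, d r) * p (ystar s) :=
  stmt_4_general ω τ hω d p ystar hd hdper hp hy hyper hH3a
end

section
/- Let d : ℝ → ℝ be continuous, positive and ω-periodic, and g : ℝ → ℝ continuous with g(t) ≥ 0. If ∫₀^ω p(t) dt ≥ (exp(∫₀^ω d) - 1)·max_{t∈[0,ω]} exp(∫ₜ^{t+τ} d(r) dr) for a continuous nonnegative ω-periodic function p and delay τ > 0, then min_{t∈[0,ω]} ∫ₜ^{t+ω} exp(∫_{t+τ}^{s} d(r) dr)·p(s) ds ≥ exp(∫₀^ω d) - 1. -/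
theorem stmt_6 (ω τ : ℝ) (hω : 0 < ω) (hτ : 0 < τ) (d g p : ℝ → ℝ)
    (hd : Continuous d) (hdpos : ∀ t, 0 < d t) (hdper : Function.Periodic d ω)
    (hg : Continuous g) (hgpos : ∀ t, 0 ≤ g t)
    (hp : Continuous p) (hppos : ∀ t, 0 ≤ p t) (hpper : Function.Periodic p ω)
    (hH3b : (Real.exp (∫ r in (0:ℝ)..ω, d r) - 1) *
        sSup ((fun t => Real.exp (∫ r in t..(t + τ), d r)) '' Set.Icc 0 ω) ≤
      ∫ t in (0:ℝ)..ω, p t) :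
    Real.exp (∫ r in (0:ℝ)..ω, d r) - 1 ≤
      sInf ((fun t => ∫ s in t..(t + ω), Real.exp (∫ r in (t + τ)..s, d r) * p s) ''
        Set.Icc 0 ω) := by
  set D := ∫ r in (0:ℝ)..ω, d r with hDdef
  have hD0 : 0 ≤ D := intervalIntegral.integral_nonneg hω.le (fun x _ => (hdpos x).le)
  have hE0 : 0 ≤ Real.exp D - 1 := by
    have := Real.one_le_exp hD0; linarith
  apply le_csInf
  · exact (Set.nonempty_Icc.mpr hω.le).image _
  rintro b ⟨t, ht, rfl⟩
  set I := ∫ r in t..(t + τ), d r with hIdef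
  -- S ≥ exp I
  have hcont : Continuous fun t : ℝ => Real.exp (∫ r in t..(t + τ), d r) := by
    apply Real.continuous_exp.comp
    have h1 : Continuous fun x : ℝ => ∫ r in (0:ℝ)..x, d r :=
      intervalIntegral.continuous_primitive (fun a b => hd.intervalIntegrable a b) 0
    have : (fun t : ℝ => ∫ r in t..(t + τ), d r)
        = fun t => (∫ r in (0:ℝ)..(t + τ), d r) - ∫ r in (0:ℝ)..t, d r := by
      funext t
      rw [intervalIntegral.integral_interval_sub_left (hd.intervalIntegrable _ _)
        (hd.intervalIntegrable _ _)]
    rw [this]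
    exact (h1.comp (continuous_id.add continuous_const)).sub h1
  have hSsup : Real.exp I ≤
      sSup ((fun t => Real.exp (∫ r in t..(t + τ), d r)) '' Set.Icc 0 ω) := by
    apply le_csSup
    · exact (isCompact_Icc.image hcont).bddAbove
    · exact Set.mem_image_of_mem _ ht
  -- pointwise bound on the integrand
  have hpt : ∀ s ∈ Set.Icc t (t + ω),
      Real.exp (-I) * p s ≤ Real.exp (∫ r in (t + τ)..s, d r) * p s := by
    intro s hs
    apply mul_le_mul_of_nonneg_right _ (hppos s)
    apply Real.exp_le_exp.mpr
    have hsplit : (∫ r in (t + τ)..t, d r) + ∫ r in t..s, d r = ∫ r in (t + τ)..s, d r :=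
      intervalIntegral.integral_add_adjacent_intervals (hd.intervalIntegrable _ _)
        (hd.intervalIntegrable _ _)
    have h1 : (∫ r in (t + τ)..t, d r) = -I := by
      rw [hIdef, intervalIntegral.integral_symm]
    have h2 : 0 ≤ ∫ r in t..s, d r :=
      intervalIntegral.integral_nonneg hs.1 (fun x _ => (hdpos x).le)
    linarith [hsplit ▸ (by linarith : -I ≤ (∫ r in (t + τ)..t, d r) + ∫ r in t..s, d r)]
  -- integrability
  have hcont2 : Continuous fun s : ℝ => Real.exp (∫ r in (t + τ)..s, d r) * p s := by
    apply Continuous.mul _ hp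
    apply Real.continuous_exp.comp
    exact intervalIntegral.continuous_primitive (fun a b => hd.intervalIntegrable a b) (t + τ)
  have hmono : ∫ s in t..(t + ω), Real.exp (-I) * p s ≤
      ∫ s in t..(t + ω), Real.exp (∫ r in (t + τ)..s, d r) * p s := by
    apply intervalIntegral.integral_mono_on (by linarith)
    · exact (continuous_const.mul hp).intervalIntegrable _ _
    · exact hcont2.intervalIntegrable _ _
    · exact hpt
  have hper : (∫ s in t..(t + ω), p s) = ∫ s in (0:ℝ)..ω, p s := by
    have := hpper.intervalIntegral_add_eq t 0
    simpa using this
  have hleft : Real.exp D - 1 ≤ ∫ s in t..(t + ω), Real.exp (-I) * p s := by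
    rw [intervalIntegral.integral_const_mul, hper]
    calc Real.exp D - 1 = Real.exp (-I) * ((Real.exp D - 1) * Real.exp I) := by
          rw [mul_comm (Real.exp D - 1), ← mul_assoc, ← Real.exp_add]
          simp
      _ ≤ Real.exp (-I) * ((Real.exp D - 1) *
            sSup ((fun t => Real.exp (∫ r in t..(t + τ), d r)) '' Set.Icc 0 ω)) := by
          apply mul_le_mul_of_nonneg_left _ (Real.exp_nonneg _)
          exact mul_le_mul_of_nonneg_left hSsup hE0
      _ ≤ Real.exp (-I) * ∫ s in (0:ℝ)..ω, p s :=
          mul_le_mul_of_nonneg_left hH3b (Real.exp_nonneg _)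
  linarith
end

section
/- Let a, b : ℝ → ℝ be continuous, nonnegative, ω-periodic (ω > 1), with ∫₀^ω (b(t) - a(t)) dt > 0 and b(t+1) - a(t) ≥ 0 for all t. Then every solution x of x'(t) = -a(t)x(t) + b(t)x(t-1) with continuous initial data x₀ = φ on [-1,0], φ ≥ 0, φ not identically zero on [-1,0] with φ(0) > 0, satisfies x(t) > 0 for all t ≥ 0. -/
/-!
Multiplying by the integrating factor `exp (∫₀ᵗ a)` turns the equation into
`(x · exp (∫₀ᵗ a))' = b(t) x(t - 1) exp (∫₀ᵗ a)`. By the method of steps, if `x ≥ 0` on `[-1, n]`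
then this derivative is nonnegative on `[0, n + 1]`, so `x · exp (∫₀ᵗ a)` stays above its positive
value `x 0` there; induction on `n` gives `x > 0` on `[0, ∞)`.
-/

open Real Set

noncomputable def integratingFactor (a : ℝ → ℝ) (t : ℝ) : ℝ :=
  exp (∫ s in (0 : ℝ)..t, a s)

section IntegratingFactor

variable {a : ℝ → ℝ}

lemma integratingFactor_pos (a : ℝ → ℝ) (t : ℝ) : 0 < integratingFactor a t :=
  exp_pos _

@[simp]
lemma integratingFactor_zero (a : ℝ → ℝ) : integratingFactor a 0 = 1 := by
  simp [integratingFactor]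

lemma hasDerivAt_integratingFactor (ha : Continuous a) (t : ℝ) :
    HasDerivAt (integratingFactor a) (integratingFactor a t * a t) t :=
  (hasDerivAt_exp _).comp t <| intervalIntegral.integral_hasDerivAt_right
    (ha.intervalIntegrable 0 t) (ha.stronglyMeasurableAtFilter _ _) ha.continuousAt

lemma continuous_integratingFactor (ha : Continuous a) : Continuous (integratingFactor a) :=
  continuous_iff_continuousAt.2 fun t => (hasDerivAt_integratingFactor ha t).continuousAt

lemma HasDerivAt.mul_integratingFactor (ha : Continuous a) {x : ℝ → ℝ} {f t : ℝ}
    (hx : HasDerivAt x (-a t * x t + f) t) :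
    HasDerivAt (fun s => x s * integratingFactor a s) (f * integratingFactor a t) t :=
  (hx.fun_mul (hasDerivAt_integratingFactor ha t)).congr_deriv (by ring)

lemma monotoneOn_mul_integratingFactor (ha : Continuous a) {x f : ℝ → ℝ} {S T : ℝ}
    (hxc : ContinuousOn x (Icc S T))
    (hx : ∀ t ∈ Ioo S T, HasDerivAt x (-a t * x t + f t) t)
    (hf : ∀ t ∈ Ioo S T, 0 ≤ f t) :
    MonotoneOn (fun s => x s * integratingFactor a s) (Icc S T) := by
  refine monotoneOn_of_hasDerivWithinAt_nonneg (f' := fun t => f t * integratingFactor a t)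
    (convex_Icc S T)
    (hxc.mul (continuous_integratingFactor ha).continuousOn) (fun t ht => ?_) (fun t ht => ?_)
  all_goals rw [interior_Icc] at ht
  · exact ((hx t ht).mul_integratingFactor ha).hasDerivWithinAt
  · exact mul_nonneg (hf t ht) (integratingFactor_pos a t).le

end IntegratingFactor

theorem pos_of_hasDerivAt_delay {a b x : ℝ → ℝ} (ha : Continuous a) (hb : ∀ t, 0 ≤ b t)
    (hxc : ContinuousOn x (Ici (-1)))
    (hode : ∀ t > 0, HasDerivAt x (-a t * x t + b t * x (t - 1)) t)
    (hinit : ∀ t ∈ Icc (-1) 0, 0 ≤ x t) (hx0 : 0 < x 0) :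
    ∀ t ≥ 0, 0 < x t := by
  have step : ∀ n : ℕ, ∀ t ∈ Icc (0 : ℝ) n, 0 < x t := by
    intro n
    induction n with
    | zero =>
      intro t ht
      rwa [le_antisymm (by simpa using ht.2) ht.1]
    | succ n ih =>
      have hnonneg : ∀ s ∈ Icc (-1 : ℝ) n, 0 ≤ x s := fun s hs =>
        (le_or_gt s 0).elim (fun h => hinit s ⟨hs.1, h⟩) fun h => (ih s ⟨h.le, hs.2⟩).le
      have hmono := monotoneOn_mul_integratingFactor ha (S := 0) (T := n + 1)
        (hxc.mono fun s hs => show (-1 : ℝ) ≤ s by linarith [hs.1])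
        (fun t ht => hode t ht.1) fun t ht =>
          mul_nonneg (hb t) (hnonneg (t - 1) ⟨by linarith [ht.1], by linarith [ht.2]⟩)
      intro t ht
      have hle := hmono ⟨le_rfl, by positivity⟩ ⟨ht.1, by exact_mod_cast ht.2⟩ ht.1
      simp only [integratingFactor_zero, mul_one] at hle
      exact pos_of_mul_pos_left (hx0.trans_le hle) (integratingFactor_pos a t).le
  intro t ht
  obtain ⟨n, hn⟩ := exists_nat_ge t
  exact step n t ⟨ht, hn⟩

theorem stmt_8_general (a b : ℝ → ℝ)
    (ha : Continuous a)
    (hbpos : ∀ t, 0 ≤ b t)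
    (x φ : ℝ → ℝ)
    (hxc : ContinuousOn x (Set.Ici (-1 : ℝ)))
    (hode : ∀ t > (0:ℝ), HasDerivAt x (-a t * x t + b t * x (t - 1)) t)
    (hinit : ∀ t ∈ Set.Icc (-1 : ℝ) 0, x t = φ t)
    (hφnn : ∀ t ∈ Set.Icc (-1 : ℝ) 0, 0 ≤ φ t)
    (hφ0 : 0 < φ 0) :
    ∀ t ≥ (0:ℝ), 0 < x t :=
  pos_of_hasDerivAt_delay ha hbpos hxc hode (fun t ht => hinit t ht ▸ hφnn t ht)
    (hinit 0 (by norm_num) ▸ hφ0)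

theorem stmt_8 (ω : ℝ) (hω : 1 < ω) (a b : ℝ → ℝ)
    (ha : Continuous a) (hb : Continuous b)
    (hapos : ∀ t, 0 ≤ a t) (hbpos : ∀ t, 0 ≤ b t)
    (haper : Function.Periodic a ω) (hbper : Function.Periodic b ω)
    (hr : 0 < ∫ t in (0:ℝ)..ω, b t - a t)
    (hsign : ∀ t, 0 ≤ b (t + 1) - a t)
    (x φ : ℝ → ℝ)
    (hxc : ContinuousOn x (Set.Ici (-1 : ℝ)))
    (hode : ∀ t > (0:ℝ), HasDerivAt x (-a t * x t + b t * x (t - 1)) t)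
    (hinit : ∀ t ∈ Set.Icc (-1 : ℝ) 0, x t = φ t)
    (hφnn : ∀ t ∈ Set.Icc (-1 : ℝ) 0, 0 ≤ φ t)
    (hφ0 : 0 < φ 0) :
    ∀ t ≥ (0:ℝ), 0 < x t :=
  stmt_8_general a b ha hbpos x φ hxc hode hinit hφnn hφ0
end

section
/- Let d : ℝ → ℝ be continuous, positive, ω-periodic, let f : ℝ → ℝ be continuous and ω-periodic, and define D(ω) = ∫₀^ω d(s) ds and (Φx)(t) = (exp(D(ω)) - 1)⁻¹ ∫ₜ^{t+ω} exp(∫ₜ^s d(r) dr)·f(s) ds. Then Φx is differentiable and satisfies (Φx)'(t) = -d(t)(Φx)(t) + f(t) for all t ∈ ℝ. -/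
/-!
With `A` a primitive of `d`, the kernel `exp (∫ r in t..s, d r)` factors as `exp (-A t) * exp (A s)`,
so `Φ t` is `exp (-A t)` times an integral of a continuous function over `[t, t + ω]`, and the
product rule applies. The boundary terms give `exp (∫ r in t..t + ω, d r) * f (t + ω) - f t`,
which periodicity turns into `(exp (D(ω)) - 1) * f t`, exactly cancelled by the normalising factor.
-/

open intervalIntegral Real

theorem Continuous.hasDerivAt_integral_add {E : Type*} [NormedAddCommGroup E]
    [NormedSpace ℝ E] [CompleteSpace E] {g : ℝ → E} (hg : Continuous g) (ω t : ℝ) :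
    HasDerivAt (fun u => ∫ s in u..u + ω, g s) (g (t + ω) - g t) t := by
  have hprim (u : ℝ) := (hg.integral_hasStrictDerivAt 0 u).hasDerivAt
  have hsplit : (fun u => ∫ s in u..u + ω, g s) =
      fun u => (∫ s in 0..u + ω, g s) - ∫ s in 0..u, g s :=
    funext fun u => (integral_interval_sub_left (hg.intervalIntegrable _ _)
      (hg.intervalIntegrable _ _)).symm
  rw [hsplit]
  exact ((hprim (t + ω)).comp_add_const t ω).sub (hprim t)

theorem integral_exp_integral_mul_eq {d f : ℝ → ℝ} (hd : Continuous d) (a b : ℝ) :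
    ∫ s in a..b, exp (∫ r in a..s, d r) * f s =
      exp (-∫ r in 0..a, d r) * ∫ s in a..b, exp (∫ r in 0..s, d r) * f s := by
  rw [← integral_const_mul]
  refine integral_congr fun s _ => ?_
  rw [← integral_interval_sub_left (hd.intervalIntegrable 0 s) (hd.intervalIntegrable 0 a),
    sub_eq_neg_add, exp_add, mul_assoc]

theorem hasDerivAt_integral_exp_integral_mul {d f : ℝ → ℝ} (hd : Continuous d)
    (hf : Continuous f) (ω t : ℝ) :
    HasDerivAt (fun u => ∫ s in u..u + ω, exp (∫ r in u..s, d r) * f s)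
      (-d t * (∫ s in t..t + ω, exp (∫ r in t..s, d r) * f s)
        + exp (∫ r in t..t + ω, d r) * f (t + ω) - f t) t := by
  set A : ℝ → ℝ := fun u => ∫ r in 0..u, d r
  have hA (u : ℝ) : HasDerivAt A (d u) u := (hd.integral_hasStrictDerivAt 0 u).hasDerivAt
  have hAcont : Continuous A := continuous_primitive hd.intervalIntegrable 0
  have hprod : HasDerivAt (fun u => exp (-A u) * ∫ s in u..u + ω, exp (A s) * f s)
      (exp (-A t) * -d t * (∫ s in t..t + ω, exp (A s) * f s)
        + exp (-A t) * (exp (A (t + ω)) * f (t + ω) - exp (A t) * f t)) t :=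
    (hA t).neg.exp.mul (((continuous_exp.comp hAcont).mul hf).hasDerivAt_integral_add ω t)
  simp only [integral_exp_integral_mul_eq (f := f) hd _ (_ + ω)]
  convert hprod using 1
  rw [← integral_interval_sub_left (hd.intervalIntegrable 0 _) (hd.intervalIntegrable 0 t)]
  simp only [exp_sub, exp_neg]
  field_simp
  ring

theorem stmt_10 (ω : ℝ) (hω : 0 < ω) (d f : ℝ → ℝ)
    (hd : Continuous d) (hdpos : ∀ t, 0 < d t) (hdper : Function.Periodic d ω)
    (hf : Continuous f) (hfper : Function.Periodic f ω)
    (Φ : ℝ → ℝ)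
    (hΦ : ∀ t, Φ t = (Real.exp (∫ s in (0:ℝ)..ω, d s) - 1)⁻¹ *
      ∫ s in t..(t + ω), Real.exp (∫ r in t..s, d r) * f s) :
    ∀ t, HasDerivAt Φ (-d t * Φ t + f t) t := by
  intro t
  have hD : 1 < exp (∫ s in (0:ℝ)..ω, d s) :=
    one_lt_exp_iff.mpr (intervalIntegral_pos_of_pos (hd.intervalIntegrable 0 ω) hdpos hω)
  have hderiv := hasDerivAt_integral_exp_integral_mul hd hf ω t
  rw [hdper.intervalIntegral_add_eq t 0, zero_add, hfper t] at hderiv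
  rw [funext hΦ]
  refine (hderiv.const_mul (exp (∫ s in (0:ℝ)..ω, d s) - 1)⁻¹).congr_deriv ?_
  beta_reduce
  field_simp [(sub_pos.mpr hD).ne']
  ring
end

section
/- Let d : ℝ → ℝ be continuous, positive, ω-periodic, f : ℝ → ℝ continuous, ω-periodic and nonnegative, D(ω) = ∫₀^ω d, and (Φx)(t) = (exp(D(ω))-1)⁻¹ ∫ₜ^{t+ω} exp(∫ₜ^s d)·f(s) ds. Set C := (exp(D(ω))-1)⁻¹ ∫₀^ω f(s) ds. Then C ≤ (Φx)(t) ≤ exp(D(ω))·C for all t, and hence (Φx)(t) ≥ exp(-D(ω))·max_{s∈[0,ω]}(Φx)(s) for all t. -/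
/-!
Since `d ≥ 0`, the weight `exp (∫ₜ^s d)` lies between `1` and `exp (∫ₜ^{t+ω} d) = exp D` on
`[t, t + ω]`, and `∫ₜ^{t+ω} f = ∫₀^ω f` by periodicity; this gives `C ≤ Φ t ≤ exp D * C`.
The lower bound for `Φ t` is then compared with the upper bound for the supremum.
-/

open Real intervalIntegral

section WeightedIntegral

variable {d f : ℝ → ℝ} {t u : ℝ}

lemma one_le_exp_integral (hd : ∀ r, 0 ≤ d r) {s : ℝ} (hts : t ≤ s) :
    1 ≤ exp (∫ r in t..s, d r) :=
  one_le_exp (integral_nonneg hts fun r _ => hd r)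

lemma exp_integral_le_exp_integral (hd : Continuous d) (hdnn : ∀ r, 0 ≤ d r) {s : ℝ}
    (hs : s ∈ Set.Icc t u) : exp (∫ r in t..s, d r) ≤ exp (∫ r in t..u, d r) :=
  exp_le_exp.mpr <| integral_mono_interval le_rfl hs.1 hs.2
    (Filter.Eventually.of_forall hdnn) (hd.intervalIntegrable t u)

lemma continuous_exp_integral_mul (hd : Continuous d) (hf : Continuous f) (t : ℝ) :
    Continuous fun s => exp (∫ r in t..s, d r) * f s :=
  (continuous_exp.comp (continuous_primitive (fun a b => hd.intervalIntegrable a b) t)).mul hf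

lemma integral_le_integral_exp_integral_mul (hd : Continuous d) (hdnn : ∀ r, 0 ≤ d r)
    (hf : Continuous f) (hfnn : ∀ s, 0 ≤ f s) (htu : t ≤ u) :
    ∫ s in t..u, f s ≤ ∫ s in t..u, exp (∫ r in t..s, d r) * f s :=
  integral_mono_on htu (hf.intervalIntegrable t u)
    ((continuous_exp_integral_mul hd hf t).intervalIntegrable t u) fun s hs =>
      le_mul_of_one_le_left (hfnn s) (one_le_exp_integral hdnn hs.1)

lemma integral_exp_integral_mul_le (hd : Continuous d) (hdnn : ∀ r, 0 ≤ d r)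
    (hf : Continuous f) (hfnn : ∀ s, 0 ≤ f s) (htu : t ≤ u) :
    ∫ s in t..u, exp (∫ r in t..s, d r) * f s ≤ exp (∫ r in t..u, d r) * ∫ s in t..u, f s := by
  rw [← integral_const_mul]
  exact integral_mono_on htu ((continuous_exp_integral_mul hd hf t).intervalIntegrable t u)
    ((continuous_const.mul hf).intervalIntegrable t u) fun s hs =>
      mul_le_mul_of_nonneg_right (exp_integral_le_exp_integral hd hdnn hs) (hfnn s)

end WeightedIntegral

lemma inv_mul_csSup_image_le {α : Type*} {g : α → ℝ} {S : Set α} (hS : S.Nonempty) {c K : ℝ}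
    (hK : 0 < K) (hlow : ∀ x, c ≤ g x) (hup : ∀ x ∈ S, g x ≤ K * c) (x : α) :
    K⁻¹ * sSup (g '' S) ≤ g x := by
  have hsup : sSup (g '' S) ≤ K * c := csSup_le (hS.image g) (Set.forall_mem_image.mpr hup)
  calc K⁻¹ * sSup (g '' S) ≤ K⁻¹ * (K * c) := by gcongr
    _ = c := inv_mul_cancel_left₀ hK.ne' c
    _ ≤ g x := hlow x

theorem stmt_12 (ω : ℝ) (hω : 0 < ω) (d f : ℝ → ℝ)
    (hd : Continuous d) (hdpos : ∀ t, 0 < d t) (hdper : Function.Periodic d ω)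
    (hf : Continuous f) (hfper : Function.Periodic f ω) (hfnn : ∀ t, 0 ≤ f t)
    (D Cst : ℝ) (hD : D = ∫ s in (0:ℝ)..ω, d s)
    (hC : Cst = (Real.exp D - 1)⁻¹ * ∫ s in (0:ℝ)..ω, f s)
    (Φ : ℝ → ℝ)
    (hΦ : ∀ t, Φ t = (Real.exp D - 1)⁻¹ *
      ∫ s in t..(t + ω), Real.exp (∫ r in t..s, d r) * f s) :
    (∀ t, Cst ≤ Φ t ∧ Φ t ≤ Real.exp D * Cst) ∧
    (∀ t, Real.exp (-D) * sSup (Φ '' Set.Icc 0 ω) ≤ Φ t) := by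
  have hdnn : ∀ r, 0 ≤ d r := fun r => (hdpos r).le
  have hDpos : 0 < D := hD ▸ intervalIntegral_pos_of_pos (hd.intervalIntegrable 0 ω) hdpos hω
  have hscale : 0 ≤ (exp D - 1)⁻¹ := inv_nonneg.mpr (sub_nonneg.mpr (one_le_exp hDpos.le))
  have hbounds : ∀ t, Cst ≤ Φ t ∧ Φ t ≤ exp D * Cst := by
    intro t
    have htω : t ≤ t + ω := by linarith
    have hdt : ∫ r in t..t + ω, d r = D := by
      simpa [hD] using hdper.intervalIntegral_add_eq t 0
    have hft : ∫ s in t..t + ω, f s = ∫ s in (0:ℝ)..ω, f s := by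
      simpa using hfper.intervalIntegral_add_eq t 0
    rw [hΦ, hC, mul_left_comm, ← hft]
    constructor
    · gcongr
      exact integral_le_integral_exp_integral_mul hd hdnn hf hfnn htω
    · gcongr
      simpa [hdt] using integral_exp_integral_mul_le hd hdnn hf hfnn htω
  refine ⟨hbounds, fun t => ?_⟩
  rw [exp_neg]
  exact inv_mul_csSup_image_le (Set.nonempty_Icc.mpr hω.le) (exp_pos D)
    (fun s => (hbounds s).1) (fun s _ => (hbounds s).2) t
end

section
/- Let d : ℝ → ℝ be continuous, positive, ω-periodic, τ > 0, and p, y* continuous with min_{t∈[0,ω]} p(y*(t))/d(t) > max_{t∈[0,ω]} exp(∫ₜ^{t+τ} d(r) dr) (with y* ω-periodic and p∘y* nonnegative continuous). Then min_{t∈[0,ω]} ∫ₜ^{t+ω} exp(∫_{t+τ}^{s} d(r) dr)·p(y*(s)) ds > exp(∫₀^ω d) - 1. -/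
theorem stmt_14 (ω τ : ℝ) (hω : 0 < ω) (hτ : 0 < τ) (d p ystar : ℝ → ℝ)
    (hd : Continuous d) (hdpos : ∀ t, 0 < d t) (hdper : Function.Periodic d ω)
    (hp : Continuous p) (hy : Continuous ystar) (hyper : Function.Periodic ystar ω)
    (hpnn : ∀ t, 0 ≤ p (ystar t))
    (hH3c : sSup ((fun t => Real.exp (∫ r in t..(t + τ), d r)) '' Set.Icc 0 ω) <
      sInf ((fun t => p (ystar t) / d t) '' Set.Icc 0 ω)) :
    Real.exp (∫ r in (0:ℝ)..ω, d r) - 1 <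
      sInf ((fun t => ∫ s in t..(t + ω), Real.exp (∫ r in (t + τ)..s, d r) * p (ystar s)) ''
        Set.Icc 0 ω) := by
  have hdint : ∀ a b : ℝ, IntervalIntegrable d MeasureTheory.volume a b :=
    fun a b => hd.intervalIntegrable a b
  have hPc : Continuous fun s : ℝ => ∫ r in (0:ℝ)..s, d r :=
    continuous_iff_continuousAt.2 fun s =>
      ((hd.integral_hasStrictDerivAt 0 s).hasDerivAt).continuousAt
  have hint : ∀ a b : ℝ, (∫ r in a..b, d r)
      = (∫ r in (0:ℝ)..b, d r) - ∫ r in (0:ℝ)..a, d r := by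
    intro a b
    rw [eq_sub_iff_add_eq, add_comm]
    exact intervalIntegral.integral_add_adjacent_intervals (hdint 0 a) (hdint a b)
  set M := sSup ((fun t => Real.exp (∫ r in t..(t + τ), d r)) '' Set.Icc 0 ω) with hMdef
  set m := sInf ((fun t => p (ystar t) / d t) '' Set.Icc 0 ω) with hmdef
  -- continuity of the exp-integral function
  have hexpc : Continuous fun t : ℝ => Real.exp (∫ r in t..(t + τ), d r) := by
    have h : (fun t : ℝ => Real.exp (∫ r in t..(t + τ), d r))
        = fun t => Real.exp ((∫ r in (0:ℝ)..(t + τ), d r) - ∫ r in (0:ℝ)..t, d r) :=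
      funext fun t => by rw [hint]
    rw [h]
    exact Real.continuous_exp.comp ((hPc.comp (continuous_id.add continuous_const)).sub hPc)
  have hMle : ∀ t ∈ Set.Icc (0:ℝ) ω, Real.exp (∫ r in t..(t + τ), d r) ≤ M :=
    fun t ht => le_csSup ((isCompact_Icc.image hexpc).bddAbove) (Set.mem_image_of_mem _ ht)
  have hM0 : 0 < M := lt_of_lt_of_le (Real.exp_pos _) (hMle 0 ⟨le_refl 0, hω.le⟩)
  have hm0 : 0 < m := hM0.trans hH3c
  -- lower bound m ≤ p(y*(s))/d(s) for all s
  have hgc : Continuous fun s => p (ystar s) / d s :=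
    (hp.comp hy).div hd fun s => (hdpos s).ne'
  have hgper : Function.Periodic (fun s => p (ystar s) / d s) ω := fun s => by
    simp only [hyper s, hdper s]
  have hmle : ∀ s : ℝ, m ≤ p (ystar s) / d s := by
    intro s
    obtain ⟨y, hy1, hy2⟩ := hgper.exists_mem_Ico₀ hω s
    have hy2' : p (ystar s) / d s = p (ystar y) / d y := hy2
    rw [hy2']
    exact csInf_le ((isCompact_Icc.image hgc).bddBelow)
      (Set.mem_image_of_mem _ ⟨hy1.1, hy1.2.le⟩)
  have hmd : ∀ s : ℝ, m * d s ≤ p (ystar s) := fun s => (le_div_iff₀ (hdpos s)).1 (hmle s)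
  have hApos : 0 < ∫ r in (0:ℝ)..ω, d r :=
    intervalIntegral.intervalIntegral_pos_of_pos (hdint 0 ω) hdpos hω
  have hE1 : 1 < Real.exp (∫ r in (0:ℝ)..ω, d r) := by
    calc (1:ℝ) = Real.exp 0 := Real.exp_zero.symm
    _ < _ := Real.exp_lt_exp.2 hApos
  have hne : ((fun t => ∫ s in t..(t + ω),
      Real.exp (∫ r in (t + τ)..s, d r) * p (ystar s)) '' Set.Icc 0 ω).Nonempty :=
    (Set.nonempty_Icc.2 hω.le).image _
  refine lt_of_lt_of_le
    (b := m / M * (Real.exp (∫ r in (0:ℝ)..ω, d r) - 1)) ?_ (le_csInf hne ?_)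
  · have h1 : 1 < m / M := (one_lt_div hM0).2 hH3c
    nlinarith [sub_pos.2 hE1]
  · rintro b ⟨t, ht, rfl⟩
    simp only
    have hGc : Continuous fun s => Real.exp (∫ r in (t + τ)..s, d r) := by
      have h : (fun s => Real.exp (∫ r in (t + τ)..s, d r))
          = fun s => Real.exp ((∫ r in (0:ℝ)..s, d r) - ∫ r in (0:ℝ)..(t + τ), d r) :=
        funext fun s => by rw [hint]
      rw [h]
      exact Real.continuous_exp.comp (hPc.sub continuous_const)
    have hG' : ∀ s : ℝ, HasDerivAt (fun u => Real.exp (∫ r in (t + τ)..u, d r))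
        (Real.exp (∫ r in (t + τ)..s, d r) * d s) s :=
      fun s => ((hd.integral_hasStrictDerivAt (t + τ) s).hasDerivAt).exp
    have hFTC : (∫ s in t..(t + ω), Real.exp (∫ r in (t + τ)..s, d r) * d s)
        = Real.exp (∫ r in (t + τ)..(t + ω), d r) - Real.exp (∫ r in (t + τ)..t, d r) :=
      intervalIntegral.integral_eq_sub_of_hasDerivAt (fun s _ => hG' s)
        ((hGc.mul hd).intervalIntegrable _ _)
    have hmono : (∫ s in t..(t + ω), m * (Real.exp (∫ r in (t + τ)..s, d r) * d s))
        ≤ ∫ s in t..(t + ω), Real.exp (∫ r in (t + τ)..s, d r) * p (ystar s) := by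
      refine intervalIntegral.integral_mono_on (by linarith)
        ((continuous_const.mul (hGc.mul hd)).intervalIntegrable _ _)
        ((hGc.mul (hp.comp hy)).intervalIntegrable _ _) ?_
      intro s _
      have h1 := hmd s
      have h2 : (0:ℝ) ≤ Real.exp (∫ r in (t + τ)..s, d r) := (Real.exp_pos _).le
      calc m * (Real.exp (∫ r in (t + τ)..s, d r) * d s)
          = Real.exp (∫ r in (t + τ)..s, d r) * (m * d s) := by ring
        _ ≤ Real.exp (∫ r in (t + τ)..s, d r) * p (ystar s) :=
            mul_le_mul_of_nonneg_left h1 h2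
    have hpull : (∫ s in t..(t + ω), m * (Real.exp (∫ r in (t + τ)..s, d r) * d s))
        = m * ∫ s in t..(t + ω), Real.exp (∫ r in (t + τ)..s, d r) * d s :=
      intervalIntegral.integral_const_mul m _
    have hA : (∫ r in t..(t + ω), d r) = ∫ r in (0:ℝ)..ω, d r := by
      simpa using hdper.intervalIntegral_add_eq t 0
    have hAB : (∫ r in (t + τ)..(t + ω), d r)
        = (∫ r in (0:ℝ)..ω, d r) - ∫ r in t..(t + τ), d r := by
      rw [← hA, hint (t + τ), hint t (t + ω), hint t (t + τ)]; ring
    have hBt : (∫ r in (t + τ)..t, d r) = -(∫ r in t..(t + τ), d r) := by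
      rw [hint (t + τ) t, hint t (t + τ)]; ring
    have hxM : Real.exp (∫ r in t..(t + τ), d r) ≤ M := hMle t ht
    have hx : 0 < Real.exp (∫ r in t..(t + τ), d r) := Real.exp_pos _
    have key : m / M * (Real.exp (∫ r in (0:ℝ)..ω, d r) - 1)
        ≤ m * (Real.exp (∫ r in (t + τ)..(t + ω), d r)
            - Real.exp (∫ r in (t + τ)..t, d r)) := by
      rw [hAB, hBt, Real.exp_sub, Real.exp_neg, div_mul_eq_mul_div, div_le_iff₀ hM0]
      have h4 : 1 ≤ M / Real.exp (∫ r in t..(t + τ), d r) := (one_le_div hx).2 hxM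
      have h5 : 0 ≤ m * (Real.exp (∫ r in (0:ℝ)..ω, d r) - 1) :=
        le_of_lt (mul_pos hm0 (sub_pos.2 hE1))
      calc m * (Real.exp (∫ r in (0:ℝ)..ω, d r) - 1)
          = m * (Real.exp (∫ r in (0:ℝ)..ω, d r) - 1) * 1 := (mul_one _).symm
        _ ≤ m * (Real.exp (∫ r in (0:ℝ)..ω, d r) - 1)
            * (M / Real.exp (∫ r in t..(t + τ), d r)) :=
            mul_le_mul_of_nonneg_left h4 h5
        _ = m * (Real.exp (∫ r in (0:ℝ)..ω, d r) / Real.exp (∫ r in t..(t + τ), d r)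
            - (Real.exp (∫ r in t..(t + τ), d r))⁻¹) * M := by
            field_simp
    calc m / M * (Real.exp (∫ r in (0:ℝ)..ω, d r) - 1)
        ≤ m * (Real.exp (∫ r in (t + τ)..(t + ω), d r)
            - Real.exp (∫ r in (t + τ)..t, d r)) := key
      _ = ∫ s in t..(t + ω), m * (Real.exp (∫ r in (t + τ)..s, d r) * d s) := by
          rw [hpull, hFTC]
      _ ≤ _ := hmono
end
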